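/- Let A ∈ ℝ^{m×n}. Let U ∈ ℝ^{m×s₁}, V ∈ ℝ^{n×s₂} and U' ∈ ℝ^{m×s₁'}, V' ∈ ℝ^{n×s₂'} all have orthonormal columns, and suppose the search subspaces are nested: span(U) ⊆ span(U') and span(V) ⊆ span(V'). Let θᵢ and θᵢ' denote the i-th largest singular values of Uᵀ A V and U'ᵀ A V', respectively, and σᵢ the i-th largest singular value of A. Then θᵢ ≤ θᵢ' ≤ σᵢ for every i = 1, …, min(s₁, s₂); i.e., the Ritz singular values increase monotonically toward the singular values as the search subspaces expand. -/

import Mathlib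

/-!
Since U' U'ᵀ fixes span(U), the matrix W = U'ᵀ U has orthonormal columns and U = U' W; likewise
V = V' Z with Z = V'ᵀ V. Hence Uᵀ A V = Wᵀ (U'ᵀ A V') Z, and both inequalities say that
compressing a matrix B to C = Wᵀ B Z, with W and Z having orthonormal columns, does not increase
its singular values. Here ‖C x‖ ≤ ‖B (Z x)‖ and ‖Z x‖ = ‖x‖. By Courant–Fischer, σᵢ(C)² ‖x‖² ≤ ‖C x‖²
on some (i+1)-dimensional subspace S; its image under Z meets the span of the eigenvectors of Bᵀ B
for the n - i smallest eigenvalues in some Z x ≠ 0, where ‖B (Z x)‖² ≤ σᵢ(B)² ‖x‖².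
-/

open Matrix

/-- The `i`-th largest singular value (0-based) of a real `m×n` matrix:
the square root of the `i`-th largest eigenvalue of `Aᵀ A`, and `0` for `i ≥ n`. -/
noncomputable def singularValue {m n : ℕ} (A : Matrix (Fin m) (Fin n) ℝ) (i : ℕ) : ℝ :=
  if h : i < n then
    Real.sqrt (((show (Aᵀ * A).IsHermitian by
      rw [← Matrix.conjTranspose_eq_transpose_of_trivial]; exact Matrix.isHermitian_conjTranspose_mul_self A).eigenvalues ∘
      Tuple.sort ((show (Aᵀ * A).IsHermitian by
      rw [← Matrix.conjTranspose_eq_transpose_of_trivial]; exact Matrix.isHermitian_conjTranspose_mul_self A).eigenvalues))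
      ((⟨i, h⟩ : Fin n).rev))
  else 0

open Module Submodule
open scoped InnerProductSpace

section

variable {𝕜 E F : Type*} [RCLike 𝕜] [NormedAddCommGroup E] [InnerProductSpace 𝕜 E]
  [NormedAddCommGroup F] [InnerProductSpace 𝕜 F]

theorem LinearIsometry.norm_adjoint_apply_le [FiniteDimensional 𝕜 E] [FiniteDimensional 𝕜 F]
    (f : E →ₗᵢ[𝕜] F) (v : F) : ‖LinearMap.adjoint f.toLinearMap v‖ ≤ ‖v‖ := by
  set u := LinearMap.adjoint f.toLinearMap v
  have h : ‖u‖ ^ 2 ≤ ‖u‖ * ‖v‖ :=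
    calc ‖u‖ ^ 2 = RCLike.re ⟪f.toLinearMap u, v⟫_𝕜 := by
          rw [← LinearMap.adjoint_inner_right, ← inner_self_eq_norm_sq (𝕜 := 𝕜)]
      _ ≤ ‖f u‖ * ‖v‖ := (RCLike.re_le_norm _).trans (norm_inner_le_norm _ _)
      _ = ‖u‖ * ‖v‖ := by rw [f.norm_map]
  nlinarith [norm_nonneg u, norm_nonneg v]

variable {ι : Type*} [Fintype ι] (b : OrthonormalBasis ι 𝕜 E)

theorem OrthonormalBasis.inner_eq_zero_of_mem_span_image {s : Set ι} {x : E}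
    (hx : x ∈ span 𝕜 (b '' s)) {j : ι} (hj : j ∉ s) : ⟪b j, x⟫_𝕜 = 0 := by
  obtain ⟨l, hl, rfl⟩ := (Finsupp.mem_span_image_iff_linearCombination 𝕜).1 hx
  rw [inner_eq_zero_symm]
  exact b.orthonormal.inner_finsupp_eq_zero hj hl

theorem OrthonormalBasis.finrank_span_image (s : Finset ι) :
    finrank 𝕜 (span 𝕜 (b '' ↑s)) = s.card := by
  rw [Set.image_eq_range]
  exact (finrank_span_eq_card (b.orthonormal.linearIndependent.comp _ Subtype.val_injective)).trans
    (Fintype.card_coe s)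

end

namespace Matrix

section RCLike

variable {𝕜 : Type*} [RCLike 𝕜] {m n : Type*} [Fintype m] [DecidableEq m] [Fintype n]
  [DecidableEq n]

noncomputable def toEuclideanLinearIsometry (Z : Matrix m n 𝕜) (hZ : Zᴴ * Z = 1) :
    EuclideanSpace 𝕜 n →ₗᵢ[𝕜] EuclideanSpace 𝕜 m :=
  (toEuclideanLin Z).isometryOfInner fun x y => by
    rw [← LinearMap.adjoint_inner_right, ← toEuclideanLin_conjTranspose_eq_adjoint,
      ← LinearMap.comp_apply, ← toLpLin_mul_same, hZ, toLpLin_one, LinearMap.id_apply]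

theorem norm_toEuclideanLin_conjTranspose_apply_le {W : Matrix m n 𝕜} (hW : Wᴴ * W = 1)
    (v : EuclideanSpace 𝕜 m) : ‖toEuclideanLin Wᴴ v‖ ≤ ‖v‖ := by
  rw [toEuclideanLin_conjTranspose_eq_adjoint]
  exact (toEuclideanLinearIsometry W hW).norm_adjoint_apply_le v

theorem inner_toEuclideanLin_conjTranspose_mul_self (B : Matrix m n 𝕜)
    (x : EuclideanSpace 𝕜 n) :
    ⟪x, toEuclideanLin (Bᴴ * B) x⟫_𝕜 = ‖toEuclideanLin B x‖ ^ 2 := by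
  rw [toLpLin_mul_same, toEuclideanLin_conjTranspose_eq_adjoint, LinearMap.comp_apply,
    LinearMap.adjoint_inner_right, inner_self_eq_norm_sq_to_K]

theorem IsHermitian.toEuclideanLin_eigenvectorBasis {A : Matrix n n 𝕜} (hA : A.IsHermitian)
    (j : n) : toEuclideanLin A (hA.eigenvectorBasis j) = hA.eigenvalues j • hA.eigenvectorBasis j :=
  WithLp.ofLp_injective 2 (by simpa [toLpLin_apply] using hA.mulVec_eigenvectorBasis j)

end RCLike

theorem mul_transpose_mul_eq_of_span_le {R : Type*} [CommRing R] {m s s' : Type*} [Fintype m]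
    [Fintype s] [DecidableEq s] [Fintype s'] [DecidableEq s'] {U : Matrix m s R}
    {U' : Matrix m s' R} (hU' : U'ᵀ * U' = 1)
    (h : span R (Set.range Uᵀ) ≤ span R (Set.range U'ᵀ)) : U' * (U'ᵀ * U) = U := by
  have hfix : ∀ x ∈ LinearMap.range U'.mulVecLin, U' *ᵥ (U'ᵀ *ᵥ x) = x := by
    rintro _ ⟨c, rfl⟩
    rw [mulVecLin_apply, mulVec_mulVec (M := U'ᵀ), hU', one_mulVec]
  refine ext_of_mulVec_single fun j => ?_
  rw [← mulVec_mulVec, ← mulVec_mulVec, mulVec_single_one]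
  exact hfix _ (by rw [range_mulVecLin]; exact h (subset_span ⟨j, rfl⟩))

namespace IsHermitian

section Expansion

variable {n : Type*} [Fintype n] [DecidableEq n] {A : Matrix n n ℝ} (hA : A.IsHermitian)

theorem inner_toEuclideanLin_self (x : EuclideanSpace ℝ n) :
    ⟪x, toEuclideanLin A x⟫_ℝ = ∑ j, hA.eigenvalues j * ⟪hA.eigenvectorBasis j, x⟫_ℝ ^ 2 := by
  nth_rw 2 [← hA.eigenvectorBasis.sum_repr' x]
  simp only [map_sum, map_smul, hA.toEuclideanLin_eigenvectorBasis, inner_sum, smul_smul,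
    real_inner_smul_right, real_inner_comm x]
  exact Finset.sum_congr rfl fun j _ => by ring

theorem inner_toEuclideanLin_sub_mul_norm_sq {s : Finset n} {x : EuclideanSpace ℝ n}
    (hx : x ∈ span ℝ (hA.eigenvectorBasis '' ↑s)) (c : ℝ) :
    ⟪x, toEuclideanLin A x⟫_ℝ - c * ‖x‖ ^ 2 =
      ∑ j ∈ s, (hA.eigenvalues j - c) * ⟪hA.eigenvectorBasis j, x⟫_ℝ ^ 2 := by
  rw [hA.inner_toEuclideanLin_self, ← hA.eigenvectorBasis.sum_sq_inner_right x, Finset.mul_sum,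
    ← Finset.sum_sub_distrib (G := ℝ)]
  refine (Finset.sum_subset (Finset.subset_univ s) fun j _ hj => ?_).symm.trans ?_
  · rw [hA.eigenvectorBasis.inner_eq_zero_of_mem_span_image hx (by simpa using hj)]
    ring
  · exact Finset.sum_congr rfl fun j _ => by ring

end Expansion

section Sorted

variable {n : ℕ} {A : Matrix (Fin n) (Fin n) ℝ} (hA : A.IsHermitian)

noncomputable def eigenvaluesDesc (i : Fin n) : ℝ :=
  (hA.eigenvalues ∘ Tuple.sort hA.eigenvalues) i.rev

theorem exists_finrank_eq_forall_eigenvaluesDesc_mul_le (i : Fin n) :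
    ∃ S : Submodule ℝ (EuclideanSpace ℝ (Fin n)), finrank ℝ S = i + 1 ∧
      ∀ x ∈ S, hA.eigenvaluesDesc i * ‖x‖ ^ 2 ≤ ⟪x, toEuclideanLin A x⟫_ℝ := by
  let σ := Tuple.sort hA.eigenvalues
  refine ⟨span ℝ (hA.eigenvectorBasis '' ↑((Finset.Ici i.rev).map σ.toEmbedding)), ?_,
    fun x hx => ?_⟩
  · rw [hA.eigenvectorBasis.finrank_span_image, Finset.card_map, Fin.card_Ici, Fin.val_rev]
    omega
  · rw [← sub_nonneg, hA.inner_toEuclideanLin_sub_mul_norm_sq hx]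
    refine Finset.sum_nonneg fun j hj => ?_
    obtain ⟨k, hk, rfl⟩ := Finset.mem_map.1 hj
    have hle := Tuple.monotone_sort hA.eigenvalues (Finset.mem_Ici.1 hk)
    exact mul_nonneg (sub_nonneg.2 hle) (sq_nonneg _)

theorem exists_mem_ne_zero_inner_le_eigenvaluesDesc_mul (i : Fin n)
    {S : Submodule ℝ (EuclideanSpace ℝ (Fin n))} (hS : i < finrank ℝ S) :
    ∃ x ∈ S, x ≠ 0 ∧ ⟪x, toEuclideanLin A x⟫_ℝ ≤ hA.eigenvaluesDesc i * ‖x‖ ^ 2 := by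
  let σ := Tuple.sort hA.eigenvalues
  let T := span ℝ (hA.eigenvectorBasis '' ↑((Finset.Iic i.rev).map σ.toEmbedding))
  have hT : finrank ℝ T = n - i := by
    rw [hA.eigenvectorBasis.finrank_span_image, Finset.card_map, Fin.card_Iic, Fin.val_rev]
    omega
  have hST : ¬Disjoint S T := fun h => by
    have := Submodule.finrank_add_finrank_le_of_disjoint h
    rw [hT, finrank_euclideanSpace_fin] at this
    omega
  obtain ⟨x, hxS, hxT, hx0⟩ : ∃ x ∈ S, x ∈ T ∧ x ≠ 0 := by
    simpa [Submodule.disjoint_def] using hST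
  refine ⟨x, hxS, hx0, ?_⟩
  rw [← sub_nonpos, hA.inner_toEuclideanLin_sub_mul_norm_sq hxT]
  refine Finset.sum_nonpos fun j hj => ?_
  obtain ⟨k, hk, rfl⟩ := Finset.mem_map.1 hj
  have hle := Tuple.monotone_sort hA.eigenvalues (Finset.mem_Iic.1 hk)
  exact mul_nonpos_of_nonpos_of_nonneg (sub_nonpos.2 hle) (sq_nonneg _)

end Sorted

theorem eigenvaluesDesc_le_of_inner_le {p q : ℕ} {A : Matrix (Fin p) (Fin p) ℝ}
    {B : Matrix (Fin q) (Fin q) ℝ} (hA : A.IsHermitian) (hB : B.IsHermitian)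
    (L : EuclideanSpace ℝ (Fin p) →ₗᵢ[ℝ] EuclideanSpace ℝ (Fin q))
    (hAB : ∀ x, ⟪x, toEuclideanLin A x⟫_ℝ ≤ ⟪L x, toEuclideanLin B (L x)⟫_ℝ)
    {i : ℕ} (hip : i < p) (hiq : i < q) :
    hA.eigenvaluesDesc ⟨i, hip⟩ ≤ hB.eigenvaluesDesc ⟨i, hiq⟩ := by
  obtain ⟨S, hS, hAS⟩ := hA.exists_finrank_eq_forall_eigenvaluesDesc_mul_le ⟨i, hip⟩
  have hLS : finrank ℝ (S.map L.toLinearMap) = i + 1 :=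
    (Submodule.equivMapOfInjective _ L.injective S).finrank_eq.symm.trans hS
  obtain ⟨_, ⟨x, hxS, rfl⟩, hLx0, hBLx⟩ :=
    hB.exists_mem_ne_zero_inner_le_eigenvaluesDesc_mul ⟨i, hiq⟩ (S := S.map L.toLinearMap)
      (by rw [hLS]; exact Nat.lt_succ_self i)
  have hx : 0 < ‖x‖ ^ 2 := by
    have : x ≠ 0 := by rintro rfl; exact hLx0 (map_zero _)
    positivity
  rw [LinearIsometry.coe_toLinearMap, L.norm_map] at hBLx
  exact le_of_mul_le_mul_right ((hAS x hxS).trans ((hAB x).trans hBLx)) hx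

end IsHermitian

theorem isHermitian_transpose_mul_self {m n : Type*} [Fintype m] (A : Matrix m n ℝ) :
    (Aᵀ * A).IsHermitian := by
  simpa only [conjTranspose_eq_transpose_of_trivial] using isHermitian_conjTranspose_mul_self A

end Matrix

section SingularValue

variable {m n : ℕ} (A : Matrix (Fin m) (Fin n) ℝ)

theorem singularValue_of_lt {i : ℕ} (h : i < n) :
    singularValue A i = √((isHermitian_transpose_mul_self A).eigenvaluesDesc ⟨i, h⟩) := by
  rw [singularValue, dif_pos h]
  rfl

theorem singularValue_of_le {i : ℕ} (h : n ≤ i) : singularValue A i = 0 := by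
  rw [singularValue, dif_neg h.not_gt]

theorem singularValue_nonneg (i : ℕ) : 0 ≤ singularValue A i := by
  unfold singularValue
  split_ifs <;> positivity

end SingularValue

theorem singularValue_transpose_mul_mul_le {p q a b : ℕ} (B : Matrix (Fin p) (Fin q) ℝ)
    {W : Matrix (Fin p) (Fin a) ℝ} {Z : Matrix (Fin q) (Fin b) ℝ} (hW : Wᵀ * W = 1)
    (hZ : Zᵀ * Z = 1) (i : ℕ) : singularValue (Wᵀ * B * Z) i ≤ singularValue B i := by
  rw [← conjTranspose_eq_transpose_of_trivial] at hW hZ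
  let L := toEuclideanLinearIsometry Z hZ
  rcases lt_or_ge i b with hib | hbi
  · have hbq : b ≤ q := by
      simpa using LinearMap.finrank_le_finrank_of_injective L.injective
    rw [singularValue_of_lt _ hib, singularValue_of_lt _ (hib.trans_le hbq)]
    refine Real.sqrt_le_sqrt (IsHermitian.eigenvaluesDesc_le_of_inner_le _ _ L (fun x => ?_) _ _)
    simp only [← conjTranspose_eq_transpose_of_trivial, inner_toEuclideanLin_conjTranspose_mul_self]
    rw [toLpLin_mul_same, toLpLin_mul_same, LinearMap.comp_apply, LinearMap.comp_apply]
    gcongr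
    exact norm_toEuclideanLin_conjTranspose_apply_le hW _
  · rw [singularValue_of_le _ hbi]
    exact singularValue_nonneg B i

theorem ritz_singular_value_monotone_general {m n s₁ s₂ s₁' s₂' : ℕ}
    (A : Matrix (Fin m) (Fin n) ℝ)
    (U : Matrix (Fin m) (Fin s₁) ℝ) (V : Matrix (Fin n) (Fin s₂) ℝ)
    (U' : Matrix (Fin m) (Fin s₁') ℝ) (V' : Matrix (Fin n) (Fin s₂') ℝ)
    (hU : Uᵀ * U = 1) (hV : Vᵀ * V = 1) (hU' : U'ᵀ * U' = 1) (hV' : V'ᵀ * V' = 1)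
    (hUU' : Submodule.span ℝ (Set.range Uᵀ) ≤ Submodule.span ℝ (Set.range U'ᵀ))
    (hVV' : Submodule.span ℝ (Set.range Vᵀ) ≤ Submodule.span ℝ (Set.range V'ᵀ))
    (i : ℕ) :
    singularValue (Uᵀ * A * V) i ≤ singularValue (U'ᵀ * A * V') i ∧
    singularValue (U'ᵀ * A * V') i ≤ singularValue A i := by
  have hUfix := mul_transpose_mul_eq_of_span_le hU' hUU'
  have hVfix := mul_transpose_mul_eq_of_span_le hV' hVV'
  have hW : (U'ᵀ * U)ᵀ * (U'ᵀ * U) = 1 := by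
    rw [transpose_mul, transpose_transpose, Matrix.mul_assoc, hUfix, hU]
  have hZ : (V'ᵀ * V)ᵀ * (V'ᵀ * V) = 1 := by
    rw [transpose_mul, transpose_transpose, Matrix.mul_assoc, hVfix, hV]
  have hcompress : Uᵀ * A * V = (U'ᵀ * U)ᵀ * (U'ᵀ * A * V') * (V'ᵀ * V) := by
    conv_lhs => rw [← hUfix, ← hVfix]
    simp only [transpose_mul, transpose_transpose, Matrix.mul_assoc]
  exact ⟨hcompress ▸ singularValue_transpose_mul_mul_le _ hW hZ i,
    singularValue_transpose_mul_mul_le A hU' hV' i⟩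

/-- Monotonicity of the Ritz singular values under expansion of the search subspaces:
if `span(U) ⊆ span(U')` and `span(V) ⊆ span(V')` (all with orthonormal columns), then
`θᵢ ≤ θᵢ' ≤ σᵢ`, where `θᵢ`, `θᵢ'`, `σᵢ` are the `i`-th largest singular values of
`Uᵀ A V`, `U'ᵀ A V'`, and `A` respectively (0-based `i`). -/
theorem ritz_singular_value_monotone {m n s₁ s₂ s₁' s₂' : ℕ}
    (A : Matrix (Fin m) (Fin n) ℝ)
    (U : Matrix (Fin m) (Fin s₁) ℝ) (V : Matrix (Fin n) (Fin s₂) ℝ)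
    (U' : Matrix (Fin m) (Fin s₁') ℝ) (V' : Matrix (Fin n) (Fin s₂') ℝ)
    (hU : Uᵀ * U = 1) (hV : Vᵀ * V = 1) (hU' : U'ᵀ * U' = 1) (hV' : V'ᵀ * V' = 1)
    (hUU' : Submodule.span ℝ (Set.range Uᵀ) ≤ Submodule.span ℝ (Set.range U'ᵀ))
    (hVV' : Submodule.span ℝ (Set.range Vᵀ) ≤ Submodule.span ℝ (Set.range V'ᵀ))
    (i : ℕ) (hi : i < min s₁ s₂) :
    singularValue (Uᵀ * A * V) i ≤ singularValue (U'ᵀ * A * V') i ∧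
    singularValue (U'ᵀ * A * V') i ≤ singularValue A i :=
  ritz_singular_value_monotone_general A U V U' V' hU hV hU' hV' hUU' hVV' i
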